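/- For positive definite ℓ×ℓ complex matrices X and Y, trace(X # Y) ≤ tgm(X,Y), where X # Y = √X·(X^{-1/2}·Y·X^{-1/2})^{1/2}·√X is the matrix geometric mean. -/

import Mathlib

open Matrix
open scoped ComplexOrder

namespace Matrix.PosSemidef

/-- The positive semidefinite square root of a positive semidefinite matrix -/
noncomputable def sqrt {n : Type*} {𝕜 : Type*} [Fintype n] [RCLike 𝕜] [DecidableEq n]
    {A : Matrix n n 𝕜} (hA : PosSemidef A) : Matrix n n 𝕜 :=
  hA.1.eigenvectorUnitary.1 * diagonal ((↑) ∘ (√·) ∘ hA.1.eigenvalues) *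
  (star hA.1.eigenvectorUnitary : Matrix n n 𝕜)

lemma posSemidef_sqrt {n : Type*} {𝕜 : Type*} [Fintype n] [RCLike 𝕜] [DecidableEq n]
    {A : Matrix n n 𝕜} (hA : PosSemidef A) : PosSemidef hA.sqrt := by
  apply PosSemidef.mul_mul_conjTranspose_same
  refine posSemidef_diagonal_iff.mpr fun i ↦ ?_
  rw [Function.comp_apply, RCLike.nonneg_iff]
  constructor
  · simp only [RCLike.ofReal_re]
    exact Real.sqrt_nonneg _
  · simp only [RCLike.ofReal_im]

end Matrix.PosSemidef

/-- The product `√X * Y * √X` is positive semidefinite. -/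
theorem sqrt_mul_mul_sqrt_posSemidef {n : Type*} [Fintype n] [DecidableEq n]
    {X Y : Matrix n n ℂ} (hX : X.PosSemidef) (hY : Y.PosSemidef) :
    (hX.sqrt * Y * hX.sqrt).PosSemidef := by
  have h := hY.conjTranspose_mul_mul_same (B := hX.sqrt)
  rwa [hX.posSemidef_sqrt.isHermitian.eq] at h

/-- The tracial geometric mean `tgm(X,Y) = trace √(√X·Y·√X)`. -/
noncomputable def tgm {n : Type*} [Fintype n] [DecidableEq n]
    {X Y : Matrix n n ℂ} (hX : X.PosSemidef) (hY : Y.PosSemidef) : ℝ :=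
  ((sqrt_mul_mul_sqrt_posSemidef hX hY).sqrt.trace).re

/-- The matrix geometric mean `X # Y = √X·(X^{-1/2}·Y·X^{-1/2})^{1/2}·√X`
of positive definite matrices, where `X^{-1/2} = √(X⁻¹)`. -/
noncomputable def matrixGeomMean {ℓ : ℕ} {X Y : Matrix (Fin ℓ) (Fin ℓ) ℂ}
    (hX : X.PosDef) (hY : Y.PosDef) : Matrix (Fin ℓ) (Fin ℓ) ℂ :=
  hX.posSemidef.sqrt *
    (sqrt_mul_mul_sqrt_posSemidef hX.inv.posSemidef hY.posSemidef).sqrt *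
    hX.posSemidef.sqrt

/-!
With `A = √X` and `S = (A⁻¹ Y A⁻¹)^{1/2}` we have `trace (X # Y) = trace (A S A) = trace (S X)`,
and `M = S X` satisfies `Mᴴ M = X S² X = A Y A`, so `√(A Y A) = |M|`. The claim is therefore
`Re trace M ≤ trace |M|`. Since `|M|` is invertible, `M = U |M|` with `U = M |M|⁻¹` unitary, and
with `R = |M|^{1/2}` the inequality is `‖R - Uᴴ R‖² ≥ 0` in the Frobenius norm, expanded.
-/

namespace Matrix

variable {n 𝕜 : Type*} [Fintype n] [DecidableEq n] [RCLike 𝕜]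

open scoped MatrixOrder

lemma PosSemidef.sqrt_eq_cfcSqrt {A : Matrix n n 𝕜} (hA : A.PosSemidef) :
    hA.sqrt = CFC.sqrt A := by
  rw [CFC.sqrt_eq_real_sqrt A hA.nonneg, cfcₙ_eq_cfc, hA.1.cfc_eq, IsHermitian.cfc,
    Unitary.conjStarAlgAut_apply]
  rfl

lemma PosSemidef.sqrt_mul_self {A : Matrix n n 𝕜} (hA : A.PosSemidef) :
    hA.sqrt * hA.sqrt = A := by
  rw [hA.sqrt_eq_cfcSqrt]
  exact CFC.sqrt_mul_sqrt_self A hA.nonneg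

lemma PosSemidef.eq_sqrt_of_mul_self_eq {A B : Matrix n n 𝕜} (hA : A.PosSemidef)
    (hB : B.PosSemidef) (hAB : A * A = B) : A = hB.sqrt := by
  rw [hB.sqrt_eq_cfcSqrt]
  exact ((CFC.sqrt_eq_iff B A hB.nonneg hA.nonneg).mpr hAB).symm

lemma PosDef.sqrt_inv {X : Matrix n n 𝕜} (hX : X.PosDef) :
    hX.inv.posSemidef.sqrt = hX.posSemidef.sqrt⁻¹ := by
  refine (PosSemidef.eq_sqrt_of_mul_self_eq hX.posSemidef.posSemidef_sqrt.inv _ ?_).symm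
  rw [← mul_inv_rev, hX.posSemidef.sqrt_mul_self]

lemma PosDef.posDef_sqrt {A : Matrix n n 𝕜} (hA : A.PosDef) : hA.posSemidef.sqrt.PosDef := by
  refine hA.posSemidef.posSemidef_sqrt.posDef_iff_isUnit.mpr (isUnit_mul_self_iff.mp ?_)
  rw [hA.posSemidef.sqrt_mul_self]
  exact hA.isUnit

lemma re_trace_unitary_mul_le {U T : Matrix n n 𝕜} (hU : U ∈ unitaryGroup n 𝕜)
    (hT : T.PosSemidef) : RCLike.re (U * T).trace ≤ RCLike.re T.trace := by
  set R := hT.sqrt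
  have hR : Rᴴ = R := hT.posSemidef_sqrt.isHermitian.eq
  have hRR : R * R = T := hT.sqrt_mul_self
  have hUU : U * Uᴴ = 1 := mem_unitaryGroup_iff.mp hU
  have hnonneg := (posSemidef_conjTranspose_mul_self (R - Uᴴ * R)).trace_nonneg
  have hexpand : (R - Uᴴ * R)ᴴ * (R - Uᴴ * R) = 2 • T - R * U * R - (R * U * R)ᴴ := by
    simp only [conjTranspose_sub, conjTranspose_mul, conjTranspose_conjTranspose, hR]
    calc (R - R * U) * (R - Uᴴ * R)
        = R * R + R * (U * Uᴴ) * R - R * U * R - R * (Uᴴ * R) := by noncomm_ring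
      _ = 2 • T - R * U * R - R * (Uᴴ * R) := by rw [hUU, mul_one, hRR, two_smul]
  have hcycle : (R * U * R).trace = (U * T).trace := by
    rw [trace_mul_comm, ← mul_assoc, hRR, trace_mul_comm]
  rw [hexpand, trace_sub, trace_sub, trace_conjTranspose, hcycle, trace_smul] at hnonneg
  have := (RCLike.nonneg_iff.mp hnonneg).1
  simp only [map_sub, RCLike.star_def, RCLike.conj_re, two_smul, map_add] at this
  linarith

lemma PosDef.re_trace_le_of_conjTranspose_mul_self_eq {M T : Matrix n n 𝕜} (hT : T.PosDef)
    (hMT : Mᴴ * M = T * T) : RCLike.re M.trace ≤ RCLike.re T.trace := by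
  have hdet : IsUnit T.det := isUnit_iff_isUnit_det T |>.mp hT.isUnit
  set U := M * T⁻¹
  have hU : U ∈ unitaryGroup n 𝕜 := by
    rw [mem_unitaryGroup_iff', star_eq_conjTranspose, conjTranspose_mul, conjTranspose_nonsing_inv,
      hT.isHermitian.eq]
    calc T⁻¹ * Mᴴ * (M * T⁻¹) = T⁻¹ * (Mᴴ * M) * T⁻¹ := by noncomm_ring
      _ = 1 := by
        rw [hMT, ← mul_assoc, nonsing_inv_mul _ hdet, one_mul, mul_nonsing_inv _ hdet]
  have hM : M = U * T := (nonsing_inv_mul_cancel_right T M hdet).symm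
  rw [hM]
  exact re_trace_unitary_mul_le hU hT.posSemidef

end Matrix

/-- `trace (X # Y) ≤ tgm(X, Y)` for positive definite `X`, `Y`. -/
theorem trace_geomMean_le_tgm {ℓ : ℕ} {X Y : Matrix (Fin ℓ) (Fin ℓ) ℂ}
    (hX : X.PosDef) (hY : Y.PosDef) :
    ((matrixGeomMean hX hY).trace).re ≤ tgm hX.posSemidef hY.posSemidef := by
  set A := hX.posSemidef.sqrt
  set S := (sqrt_mul_mul_sqrt_posSemidef hX.inv.posSemidef hY.posSemidef).sqrt
  set T := (sqrt_mul_mul_sqrt_posSemidef hX.posSemidef hY.posSemidef).sqrt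
  have hA : A * A = X := hX.posSemidef.sqrt_mul_self
  have hAunit : IsUnit A := hX.posDef_sqrt.isUnit
  have hAdet : IsUnit A.det := (isUnit_iff_isUnit_det A).mp hAunit
  have hS : S * S = A⁻¹ * Y * A⁻¹ := by rw [PosSemidef.sqrt_mul_self, hX.sqrt_inv]
  have hT : T * T = A * Y * A := PosSemidef.sqrt_mul_self _
  have hTpos : T.PosDef := by
    refine PosDef.posDef_sqrt <|
      (sqrt_mul_mul_sqrt_posSemidef _ hY.posSemidef).posDef_iff_isUnit.mpr ?_
    exact (hAunit.mul hY.isUnit).mul hAunit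
  have hM : (S * X)ᴴ * (S * X) = T * T := by
    rw [conjTranspose_mul, hX.isHermitian.eq, PosSemidef.posSemidef_sqrt _ |>.isHermitian.eq, hT]
    calc X * S * (S * X) = A * A * (S * S) * (A * A) := by rw [hA]; noncomm_ring
      _ = A * (A * A⁻¹) * Y * (A⁻¹ * A) * A := by rw [hS]; noncomm_ring
      _ = A * Y * A := by rw [mul_nonsing_inv _ hAdet, nonsing_inv_mul _ hAdet, mul_one, mul_one]
  have htrace : (A * S * A).trace = (S * X).trace := by
    rw [trace_mul_cycle, hA, trace_mul_comm]
  rw [tgm, matrixGeomMean, htrace]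
  exact hTpos.re_trace_le_of_conjTranspose_mul_self_eq hM
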